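/- For a symmetric polynomial P in n variables satisfying P(y, -y, x₃, …, xₙ) = P(x₃, …, xₙ) for all y (viewed as reduction from a symmetric function invariant under the pair-insertion substitutions), P is a polynomial in the odd power sums p₁, p₃, p₅, … restricted to n variables. -/

import Mathlib

/-!
Write a symmetric polynomial, homogeneous of degree `D`, as `F (p₁, …, p_D)` in the power sums.
Over an algebraically closed field of characteristic zero the power sums `p₁, …, p_D` of `m ≥ D`
points take every prescribed value, so invariance under inserting a pair `(y, -y)` says that
`F` is invariant under translation by `(y + (-y), y² + (-y)², …)`. A sum of `D` such translations
has arbitrary even coordinates, so `F` does not depend on its even arguments and the polynomial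
lies in the algebra of odd power sums. This applies to the degree `d` component of
`P (n + 2 d + 2)`; setting pairs of variables to zero carries it down to `P n`.
-/

open MvPolynomial

theorem Multiset.exists_map_univ_val_eq {α : Type*} {n : ℕ} (s : Multiset α)
    (hs : Multiset.card s = n) : ∃ x : Fin n → α, Finset.univ.val.map x = s := by
  obtain ⟨L, rfl⟩ : ∃ L : List α, (L : Multiset α) = s := Quot.exists_rep s
  obtain rfl : L.length = n := hs
  exact ⟨L.get, by rw [Fin.univ_val_map, List.ofFn_get]⟩

open Finset in
/-- The system is triangular: `e k` enters with coefficient `± k ≠ 0`, and the sum only involves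
`e i` with `i < k`. -/
theorem exists_solution_newton_identities {K : Type*} [Field K] [CharZero K] (n : ℕ)
    (b : ℕ → K) :
    ∃ e : ℕ → K, ∀ k ∈ Icc 1 n, b k = (-1) ^ (k + 1) * k * e k -
      ∑ a ∈ antidiagonal k with a.1 ∈ Set.Ioo 0 k, (-1) ^ a.1 * e a.1 * b a.2 := by
  induction n with
  | zero => exact ⟨0, by simp⟩
  | succ n ih =>
    obtain ⟨e, he⟩ := ih
    set S := ∑ a ∈ antidiagonal (n + 1) with a.1 ∈ Set.Ioo 0 (n + 1), (-1) ^ a.1 * e a.1 * b a.2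
    refine ⟨Function.update e (n + 1) ((-1) ^ n / (n + 1) * (b (n + 1) + S)), fun k hk => ?_⟩
    obtain ⟨hk1, hkn⟩ := mem_Icc.mp hk
    rw [sum_congr rfl fun a ha => by
      rw [Function.update_of_ne (by simp only [mem_filter, Set.mem_Ioo] at ha; omega)]]
    rcases hkn.lt_or_eq with hlt | rfl
    · rw [Function.update_of_ne hlt.ne]
      exact he k (mem_Icc.mpr ⟨hk1, by omega⟩)
    · have hsign : (-1 : K) ^ (n + 1 + 1) * (-1) ^ n = 1 := by
        rw [← pow_add]; exact Even.neg_one_pow ⟨n + 1, by ring⟩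
      have hn : ((n : K) + 1) ≠ 0 := n.cast_add_one_ne_zero
      rw [Function.update_self, Nat.cast_add_one]
      change _ = _ - S
      field_simp
      linear_combination (-(b (n + 1)) - S) * hsign

namespace IsAlgClosed

variable {K : Type*} [Field K] [IsAlgClosed K]

open Polynomial in
/-- Vieta: take the roots of `Xⁿ - e₁ Xⁿ⁻¹ + e₂ Xⁿ⁻² - ⋯`. -/
theorem exists_multiset_esymm_eq (n : ℕ) (e : ℕ → K) :
    ∃ s : Multiset K, Multiset.card s = n ∧ ∀ k ∈ Finset.Icc 1 n, s.esymm k = e k := by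
  set r : K[X] := ∑ i : Fin n, Polynomial.C ((-1) ^ (n - i) * e (n - i)) * Polynomial.X ^ (i : ℕ)
  have hmonic : (Polynomial.X ^ n + r).Monic := monic_X_pow_add (degree_sum_fin_lt _)
  have hdeg : (Polynomial.X ^ n + r).natDegree = n := by
    rw [natDegree_add_eq_left_of_degree_lt (by simpa using degree_sum_fin_lt _),
      natDegree_X_pow]
  have hcard : Multiset.card (Polynomial.X ^ n + r).roots = n := by
    have := IsAlgClosed.splits (Polynomial.X ^ n + r)
    rwa [splits_iff_card_roots, hdeg] at this
  refine ⟨_, hcard, fun k hk => ?_⟩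
  obtain ⟨hk1, hkn⟩ := Finset.mem_Icc.mp hk
  have hr : r.coeff (n - k) = (-1) ^ k * e k := by
    simp only [r, finsetSum_coeff, coeff_C_mul_X_pow]
    rw [Finset.sum_eq_single ⟨n - k, by omega⟩ (fun i _ hi => if_neg fun h => hi (Fin.ext h.symm))
      (by simp), if_pos rfl, Nat.sub_sub_self hkn]
  have hvieta := coeff_eq_esymm_roots_of_card (hcard.trans hdeg.symm) (k := n - k) (by omega)
  rw [hmonic.leadingCoeff, hdeg, Nat.sub_sub_self hkn, one_mul, Polynomial.coeff_add,
    Polynomial.coeff_X_pow, if_neg (by omega), zero_add, hr] at hvieta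
  exact (mul_left_cancel₀ (pow_ne_zero _ (neg_ne_zero.mpr one_ne_zero)) hvieta).symm

theorem exists_eval_esymm_eq (n : ℕ) (e : ℕ → K) :
    ∃ x : Fin n → K, ∀ k ∈ Finset.Icc 1 n, eval x (esymm (Fin n) K k) = e k := by
  obtain ⟨s, hs, hse⟩ := exists_multiset_esymm_eq n e
  obtain ⟨x, hx⟩ := s.exists_map_univ_val_eq hs
  refine ⟨x, fun k hk => ?_⟩
  rw [← hse k hk, ← hx, ← aeval_esymm_eq_multiset_esymm (Fin n) K]
  rfl

open Finset in
theorem exists_sum_pow_eq [CharZero K] (n : ℕ) (b : ℕ → K) :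
    ∃ x : Fin n → K, ∀ k ∈ Icc 1 n, ∑ i, x i ^ k = b k := by
  obtain ⟨e, he⟩ := exists_solution_newton_identities n b
  obtain ⟨x, hx⟩ := exists_eval_esymm_eq n e
  refine ⟨x, fun k hk => ?_⟩
  induction k using Nat.strong_induction_on with
  | _ k ih =>
  obtain ⟨hk1, hkn⟩ := mem_Icc.mp hk
  have newton := congrArg (eval x) (psum_eq_mul_esymm_sub_sum (Fin n) K k hk1)
  simp only [psum, map_sum, map_sub, map_mul, map_pow, map_neg, map_one, map_natCast,
    eval_X] at newton
  rw [newton, he k hk, hx k hk]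
  congr 1
  refine sum_congr rfl fun a ha => ?_
  simp only [mem_filter, HasAntidiagonal.mem_antidiagonal, Set.mem_Ioo] at ha
  rw [hx a.1 (mem_Icc.mpr ⟨by omega, by omega⟩),
    ih a.2 (by omega) (mem_Icc.mpr ⟨by omega, by omega⟩)]

end IsAlgClosed

namespace MvPolynomial

section Substitution

variable {σ τ R : Type*} [CommSemiring R]

theorem eval_aeval (z : τ → R) (g : σ → MvPolynomial τ R) (f : MvPolynomial σ R) :
    eval z (aeval g f) = eval (fun i => eval z (g i)) f :=
  eval₂Hom_bind₁ _ _ _ _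

theorem isHomogeneous_aeval_monomial {g : σ → MvPolynomial τ R} {w : σ → ℕ}
    (hg : ∀ i, (g i).IsHomogeneous (w i)) (d : σ →₀ ℕ) (c : R) :
    (aeval g (monomial d c)).IsHomogeneous (Finsupp.weight w d) := by
  rw [aeval_monomial, ← zero_add (Finsupp.weight w d), Finsupp.weight_apply]
  refine (isHomogeneous_C τ c).mul ?_
  simpa [Finsupp.sum, Finsupp.prod, mul_comm] using
    IsHomogeneous.prod _ _ _ fun i _ => (hg i).pow (d i)

theorem aeval_weightedHomogeneousComponent {g : σ → MvPolynomial τ R} {w : σ → ℕ}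
    (hg : ∀ i, (g i).IsHomogeneous (w i)) (n : ℕ) (f : MvPolynomial σ R) :
    aeval g (weightedHomogeneousComponent w n f) = homogeneousComponent n (aeval g f) := by
  classical
  induction f using MvPolynomial.induction_on' with
  | monomial d c =>
    rw [weightedHomogeneousComponent_of_mem (isWeightedHomogeneous_monomial w d c rfl),
      homogeneousComponent_of_mem (isHomogeneous_aeval_monomial hg d c)]
    split_ifs <;> simp
  | add p q hp hq => simp only [map_add, hp, hq]

theorem homogeneousComponent_aeval {g : σ → MvPolynomial τ R} (hg : ∀ i, (g i).IsHomogeneous 1)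
    (n : ℕ) (f : MvPolynomial σ R) :
    homogeneousComponent n (aeval g f) = aeval g (homogeneousComponent n f) :=
  (aeval_weightedHomogeneousComponent hg n f).symm

theorem IsWeightedHomogeneous.le_of_mem_vars {w : σ → ℕ} {f : MvPolynomial σ R} {n : ℕ}
    (hf : IsWeightedHomogeneous w f n) {i : σ} (hi : i ∈ f.vars) : w i ≤ n := by
  obtain ⟨d, hd, hid⟩ := (mem_vars_iff_mem_support i).mp hi
  exact hf (mem_support_iff.mp hd) ▸
    Finsupp.le_weight_of_ne_zero' w (Finsupp.mem_support_iff.mp hid)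

theorem isHomogeneous_psum [Fintype σ] (k : ℕ) : (psum σ R k).IsHomogeneous k :=
  IsHomogeneous.sum _ _ _ fun i _ => isHomogeneous_X_pow i k

end Substitution

theorem IsSymmetric.homogeneousComponent {σ R : Type*} [CommRing R] {f : MvPolynomial σ R}
    (hf : f.IsSymmetric) (n : ℕ) : (homogeneousComponent n f).IsSymmetric :=
  fun e => by rw [rename_homogeneousComponent, hf e]

section PowerSums

variable {σ K : Type*} [Fintype σ] [Field K] [CharZero K]

open Finset in
theorem esymm_mem_adjoin_psum (k : ℕ) :
    esymm σ K k ∈ Algebra.adjoin K (Set.range fun j : ℕ => psum σ K (j + 1)) := by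
  induction k using Nat.strong_induction_on with
  | _ k ih =>
  rcases Nat.eq_zero_or_pos k with rfl | hk
  · rw [esymm_zero]; exact Subalgebra.one_mem _
  have hk' : (k : K) ≠ 0 := by exact_mod_cast hk.ne'
  have newton : esymm σ K k = C (k : K)⁻¹ * ((-1) ^ (k + 1) *
      ∑ a ∈ antidiagonal k with a.1 < k, (-1) ^ a.1 * esymm σ K a.1 * psum σ K a.2) := by
    rw [← mul_esymm_eq_sum, ← map_natCast C, ← mul_assoc, ← map_mul, inv_mul_cancel₀ hk',
      map_one, one_mul]
  have hsign : ∀ i : ℕ, ((-1) ^ i : MvPolynomial σ K) ∈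
      Algebra.adjoin K (Set.range fun j : ℕ => psum σ K (j + 1)) :=
    fun i => Subalgebra.pow_mem _ (Subalgebra.neg_mem _ (Subalgebra.one_mem _)) i
  rw [newton]
  refine Subalgebra.mul_mem _ (Subalgebra.algebraMap_mem _ _) (Subalgebra.mul_mem _ (hsign _)
    (Subalgebra.sum_mem _ fun a ha => Subalgebra.mul_mem _ (Subalgebra.mul_mem _ (hsign _) ?_) ?_))
  all_goals simp only [mem_filter, HasAntidiagonal.mem_antidiagonal] at ha
  · exact ih a.1 ha.2
  · exact Algebra.subset_adjoin ⟨a.2 - 1, by simp only; congr; omega⟩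

theorem IsSymmetric.mem_adjoin_psum {f : MvPolynomial σ K} (hf : f.IsSymmetric) :
    f ∈ Algebra.adjoin K (Set.range fun j : ℕ => psum σ K (j + 1)) := by
  obtain ⟨F, hF⟩ := esymmAlgHom_surjective K le_rfl ⟨f, (mem_symmetricSubalgebra f).mpr hf⟩
  have hfe :
      f ∈ Algebra.adjoin K (Set.range fun i : Fin (Fintype.card σ) => esymm σ K (i + 1)) := by
    rw [Algebra.adjoin_range_eq_range_aeval]
    exact ⟨F, by rw [AlgHom.toRingHom_eq_coe, RingHom.coe_coe, ← esymmAlgHom_apply, hF]⟩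
  exact Algebra.adjoin_le (Set.range_subset_iff.mpr fun i => esymm_mem_adjoin_psum _) hfe

/-- `F` can be taken weighted homogeneous of degree `D` for the weights `deg pⱼ = j`, so only
`p₁, …, p_D` occur. -/
theorem IsSymmetric.exists_eq_aeval_psum {f : MvPolynomial σ K} {D : ℕ} (hf : f.IsSymmetric)
    (hhom : f.IsHomogeneous D) :
    ∃ F : MvPolynomial (Fin D) K, f = aeval (fun j : Fin D => psum σ K (j + 1)) F := by
  obtain ⟨F₀, rfl⟩ : ∃ F₀ : MvPolynomial ℕ K, aeval (fun j : ℕ => psum σ K (j + 1)) F₀ = f := by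
    rw [← AlgHom.mem_range, ← Algebra.adjoin_range_eq_range_aeval]
    exact hf.mem_adjoin_psum
  have hvars :
      ↑(weightedHomogeneousComponent (· + 1) D F₀).vars ⊆ Set.range (Fin.val : Fin D → ℕ) :=
    fun j hj =>
      ⟨⟨j, (weightedHomogeneousComponent_isWeightedHomogeneous D F₀).le_of_mem_vars hj⟩, rfl⟩
  obtain ⟨F, hF⟩ := exists_rename_eq_of_vars_subset_range _ _ Fin.val_injective hvars
  refine ⟨F, ?_⟩
  have hren : aeval (fun j : Fin D => psum σ K (j + 1)) F =
      aeval (fun j : ℕ => psum σ K (j + 1)) (rename Fin.val F) := by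
    rw [aeval_rename]; rfl
  rw [hren, hF, aeval_weightedHomogeneousComponent (fun j => isHomogeneous_psum (j + 1)),
    homogeneousComponent_of_mem hhom, if_pos rfl]

end PowerSums

section PairInvariance

variable {R : Type*} [CommRing R] {m : ℕ}

/-- `f (y, -y, x) = f (0, 0, x)`, as an identity of polynomials in `y` and `x`. -/
def IsPairInvariant (f : MvPolynomial (Fin (m + 2)) R) : Prop :=
  aeval (Fin.cons (X 0) (Fin.cons (-X 0) fun i => X i.succ) :
      Fin (m + 2) → MvPolynomial (Fin (m + 1)) R) f =
    aeval (Fin.cons 0 (Fin.cons 0 fun i => X i.succ) :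
      Fin (m + 2) → MvPolynomial (Fin (m + 1)) R) f

theorem isPairInvariant_iff [IsDomain R] [Infinite R] {f : MvPolynomial (Fin (m + 2)) R} :
    IsPairInvariant f ↔ ∀ (y : R) (x : Fin m → R),
      eval (Fin.cons y (Fin.cons (-y) x)) f = eval (Fin.cons 0 (Fin.cons 0 x)) f := by
  have hpair : ∀ y x, (fun i => eval (Fin.cons y x) ((Fin.cons (X 0) (Fin.cons (-X 0)
      fun i => X i.succ) : Fin (m + 2) → MvPolynomial (Fin (m + 1)) R) i)) =
        Fin.cons y (Fin.cons (-y) x) := by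
    intro y x
    funext i
    refine Fin.cases ?_ (fun i => Fin.cases ?_ (fun i => ?_) i) i <;> simp
  have hzero : ∀ y x, (fun i => eval (Fin.cons y x) ((Fin.cons 0 (Fin.cons 0
      fun i => X i.succ) : Fin (m + 2) → MvPolynomial (Fin (m + 1)) R) i)) =
        Fin.cons 0 (Fin.cons 0 x) := by
    intro y x
    funext i
    refine Fin.cases ?_ (fun i => Fin.cases ?_ (fun i => ?_) i) i <;> simp
  refine ⟨fun h y x => ?_, fun h => MvPolynomial.funext (Fin.forall_fin_succ_pi.mpr fun y x => ?_)⟩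
  · rw [← hpair y x, ← hzero y x, ← eval_aeval, ← eval_aeval, h]
  · rw [eval_aeval, eval_aeval, hpair, hzero, h]

theorem IsPairInvariant.homogeneousComponent {f : MvPolynomial (Fin (m + 2)) R}
    (hf : IsPairInvariant f) (n : ℕ) : IsPairInvariant (homogeneousComponent n f) := by
  unfold IsPairInvariant
  rw [← homogeneousComponent_aeval, ← homogeneousComponent_aeval, hf] <;>
    refine Fin.cases ?_ (fun i => Fin.cases ?_ (fun i => ?_) i) <;>
    simp [isHomogeneous_X, isHomogeneous_zero, (isHomogeneous_X R _).neg]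

end PairInvariance

section OddPart

variable {K : Type*} [Field K] {D : ℕ} {F : MvPolynomial (Fin D) K}

theorem eval_add_sum_pair_moments
    (hF : ∀ (b : ℕ → K) (y : K),
      eval (fun j : Fin D => b (j + 1) + (y ^ (j + 1 : ℕ) + (-y) ^ (j + 1 : ℕ))) F =
        eval (fun j : Fin D => b (j + 1)) F)
    {r : ℕ} (y : Fin r → K) (b : ℕ → K) :
    eval (fun j : Fin D => b (j + 1) + ∑ i, (y i ^ (j + 1 : ℕ) + (-y i) ^ (j + 1 : ℕ))) F =
      eval (fun j : Fin D => b (j + 1)) F := by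
  induction r generalizing b with
  | zero => simp
  | succ r ih =>
    have hsplit : (fun j : Fin D => b (j + 1) + ∑ i, (y i ^ (j + 1 : ℕ) + (-y i) ^ (j + 1 : ℕ))) =
        fun j : Fin D =>
          (b (j + 1) + ∑ i : Fin r, (y i.succ ^ (j + 1 : ℕ) + (-y i.succ) ^ (j + 1 : ℕ))) +
            (y 0 ^ (j + 1 : ℕ) + (-y 0) ^ (j + 1 : ℕ)) := by
      ext j; rw [Fin.sum_univ_succ]; ring
    rw [hsplit]
    exact (hF (fun k => b k + ∑ i : Fin r, (y i.succ ^ k + (-y i.succ) ^ k)) (y 0)).trans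
      (ih (Fin.tail y) b)

theorem eval_eq_eval_ite_even [IsAlgClosed K] [CharZero K]
    (hF : ∀ (b : ℕ → K) (y : K),
      eval (fun j : Fin D => b (j + 1) + (y ^ (j + 1 : ℕ) + (-y) ^ (j + 1 : ℕ))) F =
        eval (fun j : Fin D => b (j + 1)) F)
    (b : ℕ → K) :
    eval (fun j : Fin D => b (j + 1)) F =
      eval (fun j : Fin D => if Even (j + 1 : ℕ) then 0 else b (j + 1)) F := by
  -- With `y i ^ 2 = u i`, `∑ᵢ (y i ^ j + (-y i) ^ j)` is `0` for odd `j` and `2 ∑ᵢ u i ^ k`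
  -- for `j = 2 k`, so `u` can be chosen to cancel the even coordinates of `b`.
  obtain ⟨u, hu⟩ := IsAlgClosed.exists_sum_pow_eq D fun k => -b (2 * k) / 2
  choose y hy using fun i => IsAlgClosed.exists_pow_nat_eq (u i) two_pos
  have hmoment : ∀ j : Fin D, ∑ i, (y i ^ (j + 1 : ℕ) + (-y i) ^ (j + 1 : ℕ)) =
      if Even (j + 1 : ℕ) then -b (j + 1) else 0 := by
    intro j
    split_ifs with heven
    · obtain ⟨k, hk⟩ := heven
      have := hu k (Finset.mem_Icc.mpr ⟨by omega, by omega⟩)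
      simp only [hk, ← two_mul, pow_mul, neg_sq, hy] at this ⊢
      rw [← Finset.mul_sum, this]
      ring
    · simp [(Nat.not_even_iff_odd.mp heven).neg_pow]
  rw [← eval_add_sum_pair_moments hF y b]
  congr 2 with j
  rw [hmoment]
  split_ifs <;> ring

end OddPart

noncomputable def oddPsumSubalgebra (σ R : Type*) [CommSemiring R] [Fintype σ] :
    Subalgebra R (MvPolynomial σ R) :=
  Algebra.adjoin R {q | ∃ k : ℕ, q = psum σ R (2 * k + 1)}

theorem aeval_ite_even_psum_mem_oddPsumSubalgebra {σ R : Type*} [CommSemiring R] [Fintype σ]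
    {D : ℕ} (F : MvPolynomial (Fin D) R) :
    aeval (fun j : Fin D => if Even (j + 1 : ℕ) then 0 else psum σ R (j + 1)) F ∈
      oddPsumSubalgebra σ R := by
  refine Algebra.adjoin_le (Set.range_subset_iff.mpr fun j => ?_)
    ((aeval_range _).le (AlgHom.mem_range_self _ F))
  split_ifs with heven
  · exact Subalgebra.zero_mem _
  · obtain ⟨k, hk⟩ := Nat.not_even_iff_odd.mp heven
    exact Algebra.subset_adjoin ⟨k, by rw [hk]⟩

theorem IsPairInvariant.mem_oddPsumSubalgebra {K : Type*} [Field K] [IsAlgClosed K] [CharZero K]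
    {m D : ℕ} (hD : D ≤ m) {f : MvPolynomial (Fin (m + 2)) K} (hsymm : f.IsSymmetric)
    (hhom : f.IsHomogeneous D) (hf : IsPairInvariant f) :
    f ∈ oddPsumSubalgebra (Fin (m + 2)) K := by
  obtain ⟨F, rfl⟩ := hsymm.exists_eq_aeval_psum hhom
  have heval : ∀ u, eval u (aeval (fun j : Fin D => psum (Fin (m + 2)) K (j + 1)) F) =
      eval (fun j : Fin D => ∑ i, u i ^ (j + 1 : ℕ)) F := by
    intro u
    rw [eval_aeval]
    simp [psum]
  have hshift : ∀ (b : ℕ → K) (y : K),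
      eval (fun j : Fin D => b (j + 1) + (y ^ (j + 1 : ℕ) + (-y) ^ (j + 1 : ℕ))) F =
        eval (fun j : Fin D => b (j + 1)) F := by
    intro b y
    obtain ⟨x, hx⟩ := IsAlgClosed.exists_sum_pow_eq m b
    have hpair := isPairInvariant_iff.mp hf y x
    simp only [heval, Fin.sum_univ_succ, Fin.cons_zero, Fin.cons_succ] at hpair
    convert hpair using 3 <;> funext j <;>
      rw [← hx (j + 1) (Finset.mem_Icc.mpr ⟨by omega, by omega⟩)]
    · ring
    · simp
  have hodd : aeval (fun j : Fin D => psum (Fin (m + 2)) K (j + 1)) F =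
      aeval (fun j : Fin D => if Even (j + 1 : ℕ) then 0 else psum (Fin (m + 2)) K (j + 1)) F := by
    refine MvPolynomial.funext fun u => ?_
    rw [heval, eval_eq_eval_ite_even hshift (fun k => ∑ i, u i ^ k), eval_aeval]
    congr 2
    funext j
    split_ifs <;> simp [psum]
  exact hodd ▸ aeval_ite_even_psum_mem_oddPsumSubalgebra F

section Restriction

variable {R : Type*} [CommRing R] {m : ℕ}

theorem eval_aeval_cons_zero_cons_zero (x : Fin m → R) (f : MvPolynomial (Fin (m + 2)) R) :
    eval x (aeval (Fin.cons 0 (Fin.cons 0 X) : Fin (m + 2) → MvPolynomial (Fin m) R) f) =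
      eval (Fin.cons 0 (Fin.cons 0 x)) f := by
  rw [eval_aeval]
  congr 2
  funext i
  refine Fin.cases ?_ (fun i => Fin.cases ?_ (fun i => ?_) i) i <;> simp

theorem aeval_cons_zero_cons_zero_psum {k : ℕ} (hk : k ≠ 0) :
    aeval (Fin.cons 0 (Fin.cons 0 X) : Fin (m + 2) → MvPolynomial (Fin m) R)
      (psum (Fin (m + 2)) R k) = psum (Fin m) R k := by
  simp [psum, Fin.sum_univ_succ, zero_pow hk]

theorem homogeneousComponent_aeval_cons_zero_cons_zero_mem {f : MvPolynomial (Fin (m + 2)) R}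
    {n : ℕ} (hf : homogeneousComponent n f ∈ oddPsumSubalgebra (Fin (m + 2)) R) :
    homogeneousComponent n
        (aeval (Fin.cons 0 (Fin.cons 0 X) : Fin (m + 2) → MvPolynomial (Fin m) R) f) ∈
      oddPsumSubalgebra (Fin m) R := by
  rw [homogeneousComponent_aeval (fun i => Fin.cases (isHomogeneous_zero _ _ _)
    (fun i => Fin.cases (isHomogeneous_zero _ _ _) (fun i => isHomogeneous_X R i) i) i)]
  have hle : oddPsumSubalgebra (Fin (m + 2)) R ≤ (oddPsumSubalgebra (Fin m) R).comap
      (aeval (Fin.cons 0 (Fin.cons 0 X) : Fin (m + 2) → MvPolynomial (Fin m) R)) :=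
    Algebra.adjoin_le fun _ ⟨k, hq⟩ =>
      hq ▸ Algebra.subset_adjoin ⟨k, aeval_cons_zero_cons_zero_psum (by omega)⟩
  exact hle hf

theorem homogeneousComponent_mem_oddPsumSubalgebra_of_add_two_mul
    {P : ∀ m, MvPolynomial (Fin m) R}
    (hP : ∀ m, P m =
      aeval (Fin.cons 0 (Fin.cons 0 X) : Fin (m + 2) → MvPolynomial (Fin m) R) (P (m + 2)))
    {d : ℕ} (N m : ℕ)
    (h : homogeneousComponent d (P (m + 2 * N)) ∈ oddPsumSubalgebra (Fin (m + 2 * N)) R) :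
    homogeneousComponent d (P m) ∈ oddPsumSubalgebra (Fin m) R := by
  induction N generalizing m with
  | zero => exact h
  | succ N ih =>
    rw [hP m]
    exact homogeneousComponent_aeval_cons_zero_cons_zero_mem
      (ih (m + 2) (by rwa [show m + 2 + 2 * N = m + 2 * (N + 1) by ring]))

end Restriction

end MvPolynomial

/-- A family of symmetric polynomials `P m` in `m` variables, compatible under
insertion of a pair of variables `(y, -y)` (i.e. the reduction of a symmetric
function invariant under the pair-insertion substitutions), is, in each number
of variables `n`, a polynomial in the odd power sums
`p_{2k+1}(x₁,…,xₙ) = Σ_j x_j^{2k+1}`. -/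
theorem symmetric_pair_invariant_is_poly_in_odd_power_sums
    (P : ∀ m : ℕ, MvPolynomial (Fin m) ℂ)
    (hsymm : ∀ m : ℕ, (P m).IsSymmetric)
    (hinv : ∀ (m : ℕ) (y : ℂ) (x : Fin m → ℂ),
      MvPolynomial.eval (Fin.cons y (Fin.cons (-y) x)) (P (m + 2))
        = MvPolynomial.eval x (P m))
    (n : ℕ) :
    P n ∈ Algebra.adjoin ℂ
      {q : MvPolynomial (Fin n) ℂ | ∃ k : ℕ, q = ∑ i : Fin n, X i ^ (2 * k + 1)} := by
  have hrestrict : ∀ m, P m =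
      aeval (Fin.cons 0 (Fin.cons 0 X) : Fin (m + 2) → MvPolynomial (Fin m) ℂ) (P (m + 2)) :=
    fun m => MvPolynomial.funext fun x => by
      rw [eval_aeval_cons_zero_cons_zero, ← hinv m 0 x, neg_zero]
  have hpair : ∀ m, IsPairInvariant (P (m + 2)) := fun m =>
    isPairInvariant_iff.mpr fun y x => by rw [hinv, ← hinv m 0 x, neg_zero]
  change P n ∈ oddPsumSubalgebra (Fin n) ℂ
  rw [← sum_homogeneousComponent (P n)]
  refine Subalgebra.sum_mem _ fun d _ =>
    homogeneousComponent_mem_oddPsumSubalgebra_of_add_two_mul hrestrict (d + 1) n ?_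
  rw [show n + 2 * (d + 1) = n + 2 * d + 2 by ring]
  exact ((hpair _).homogeneousComponent d).mem_oddPsumSubalgebra (by omega)
    ((hsymm _).homogeneousComponent d) (homogeneousComponent_isHomogeneous d _)
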